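/- The largest eigenvalue μ of the Laplacian matrix of the graph G strictly exceeds max over all pairs of adjacent vertices v ~ j of (2·(m_v² + m_v·m_j + m_j²) − (d_v² + d_j²))/(m_v + m_j). (This gives a counterexample to conjectured bound 59 of Brankov, Hansen and Stevanović.) -/

import Mathlib

/-- The edge list of the graph. -/
def edgeList : List (Fin 12 × Fin 12) :=
  [(0,3),(0,4),(0,8),(1,2),(1,3),(1,8),(1,10),(2,5),(2,7),(2,11),(3,7),(3,11),(4,6),(4,7),(5,8),(5,9),(6,9),(6,10),(7,10),(9,11),(10,11)]

/-- The graph under consideration. -/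
def G : SimpleGraph (Fin 12) where
  Adj v w := (v, w) ∈ edgeList ∨ (w, v) ∈ edgeList
  symm := ⟨fun _ _ h => h.symm⟩
  loopless := ⟨by intro v; fin_cases v <;> decide⟩

instance : DecidableRel G.Adj :=
  fun v w => inferInstanceAs (Decidable ((v, w) ∈ edgeList ∨ (w, v) ∈ edgeList))

/-- `d v` is the degree of the vertex `v`, as a real number. -/
noncomputable def d (v : Fin 12) : ℝ := G.degree v

/-- `m v` is the average of the degrees of the neighbours of `v`. -/
noncomputable def m (v : Fin 12) : ℝ :=
  (∑ u ∈ G.neighborFinset v, (G.degree u : ℝ)) / d v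

open Matrix in
lemma psd_smul_sub {n : Type*} [Fintype n] [DecidableEq n] {A : Matrix n n ℝ}
    (hA : A.IsHermitian) {μ : ℝ} (h : ∀ i, hA.eigenvalues i ≤ μ) :
    (μ • (1 : Matrix n n ℝ) - A).PosSemidef := by
  have hU := (Matrix.mem_unitaryGroup_iff).mp (hA.eigenvectorUnitary).2
  have hdec : μ • (1 : Matrix n n ℝ) - A =
      (hA.eigenvectorUnitary : Matrix n n ℝ) *
        Matrix.diagonal (fun i => μ - hA.eigenvalues i) *
        (hA.eigenvectorUnitary : Matrix n n ℝ)ᴴ := by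
    have hspec := hA.spectral_theorem
    have : Matrix.diagonal (fun i => μ - hA.eigenvalues i) =
        μ • (1 : Matrix n n ℝ) - Matrix.diagonal (RCLike.ofReal ∘ hA.eigenvalues) := by
      ext i j
      by_cases h' : i = j <;>
        simp [Matrix.diagonal_apply, Matrix.one_apply, h', RCLike.ofReal, Matrix.sub_apply, Matrix.smul_apply]
    rw [this, Matrix.mul_sub, Matrix.sub_mul, Matrix.mul_smul, Matrix.smul_mul, mul_one]
    have hstar : (hA.eigenvectorUnitary : Matrix n n ℝ)ᴴ = star (hA.eigenvectorUnitary : Matrix n n ℝ) := rfl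
    rw [hstar, hU]; rw [Unitary.conjStarAlgAut_apply] at hspec; exact congrArg (μ • (1 : Matrix n n ℝ) - ·) hspec
  rw [hdec]
  exact (Matrix.posSemidef_diagonal_iff.mpr (fun i => sub_nonneg.mpr (h i))).mul_mul_conjTranspose_same _

/-- A test vector close to the top eigenvector of the Laplacian. -/
noncomputable def xv : Fin 12 → ℝ := ![-29,-70,70,70,29,-29,-29,-70,29,29,70,-70]

lemma d_val (v : Fin 12) (D : ℕ) (hD : G.degree v = D) : d v = D := by simp [d, hD]

lemma m_val (v : Fin 12) (s D : ℕ) (hs : (∑ u ∈ G.neighborFinset v, G.degree u) = s)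
    (hD : G.degree v = D) : m v = (s : ℝ) / D := by
  rw [m, d_val v D hD, ← Nat.cast_sum, hs]

lemma hd_table : ∀ v : Fin 12, d v = (![3,4,4,4,3,3,3,4,3,3,4,4] : Fin 12 → ℕ) v := by
  intro v; fin_cases v <;> exact d_val _ _ (by decide)

lemma hm_table : ∀ v : Fin 12, m v = ((![10,15,15,15,10,10,10,15,10,10,15,15] : Fin 12 → ℕ) v : ℝ)
    / ((![3,4,4,4,3,3,3,4,3,3,4,4] : Fin 12 → ℕ) v) := by
  intro v; fin_cases v <;> exact m_val _ _ _ (by decide) (by decide)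

open Matrix in
lemma quad_form_val : dotProduct xv (Matrix.mulVec (G.lapMatrix ℝ) xv) = 255390 := by
  rw [← Matrix.toLinearMap₂'_apply', SimpleGraph.lapMatrix_toLinearMap₂' (R := ℝ)]
  simp (config := { decide := true }) only [Fin.sum_univ_succ, Fin.sum_univ_zero, xv,
    Matrix.cons_val_zero, Matrix.cons_val_one, Matrix.head_cons, Matrix.cons_val_succ]
  norm_num

lemma norm_sq_val : dotProduct xv xv = 34446 := by
  simp only [dotProduct, Fin.sum_univ_succ, Fin.sum_univ_zero, xv,
    Matrix.cons_val_zero, Matrix.cons_val_one, Matrix.head_cons, Matrix.cons_val_succ]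
  norm_num

theorem laplacian_spectral_radius_exceeds_bound (μ : ℝ)
    (hmem : μ ∈ spectrum ℝ (G.lapMatrix ℝ))
    (hmax : ∀ ν ∈ spectrum ℝ (G.lapMatrix ℝ), ν ≤ μ) :
    (Finset.univ.filter fun p : _ × _ => G.Adj p.1 p.2).sup' (by decide)
      (fun p => (2 * (m p.1 ^ 2 + m p.1 * m p.2 + m p.2 ^ 2) - (d p.1 ^ 2 + d p.2 ^ 2)) / (m p.1 + m p.2)) < μ := by
  have hL : (G.lapMatrix ℝ).IsHermitian := (G.posSemidef_lapMatrix (R := ℝ)).1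
  have hev : ∀ i, hL.eigenvalues i ≤ μ := fun i => hmax _ (hL.eigenvalues_mem_spectrum_real i)
  have hpsd := psd_smul_sub hL hev
  have h0 := hpsd.dotProduct_mulVec_nonneg xv
  rw [star_trivial, Matrix.sub_mulVec, Matrix.smul_mulVec, Matrix.one_mulVec,
    dotProduct_sub, dotProduct_smul, smul_eq_mul, norm_sq_val, quad_form_val] at h0
  have hμ : (255390 : ℝ) / 34446 ≤ μ := by
    rw [div_le_iff₀ (by norm_num)]
    linarith
  have hsup : (Finset.univ.filter fun p : _ × _ => G.Adj p.1 p.2).sup' (by decide)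
      (fun p => (2 * (m p.1 ^ 2 + m p.1 * m p.2 + m p.2 ^ 2) - (d p.1 ^ 2 + d p.2 ^ 2)) / (m p.1 + m p.2)) ≤ 73/10 := by
    apply Finset.sup'_le
    intro p hp
    fin_cases hp <;> norm_num [hm_table, hd_table]
  calc _ ≤ (73:ℝ)/10 := hsup
    _ < 255390 / 34446 := by norm_num
    _ ≤ μ := hμ
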